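/- Let p be a prime and let 0 → C → A → B → 0 be a short exact sequence of abelian groups in which A is divisible and C is a finite abelian p-group. For an abelian group X, let T_p X denote the p-adic Tate module, namely the inverse limit of the pⁿ-torsion subgroups X[pⁿ] with transition maps given by multiplication by p. Then the induced map T_p A → T_p B is injective, and its cokernel is isomorphic to C; that is, there is a natural exact sequence 0 → T_p A → T_p B → C → 0. -/
import Mathlib


/-- The `p`-adic Tate module of an abelian group `X`: the inverse limit
`lim←ₙ X[pⁿ]` of the `pⁿ`-torsion subgroups with transition maps given by
multiplication by `p`, realized as the group of compatible sequences. -/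
def tateModule (p : ℕ) (X : Type) [AddCommGroup X] : AddSubgroup (ℕ → X) where
  carrier := {x | (∀ n : ℕ, p ^ n • x n = 0) ∧ ∀ n : ℕ, p • x (n + 1) = x n}
  zero_mem' := ⟨fun n => by simp, fun n => by simp⟩
  add_mem' := by
    rintro x y ⟨hx1, hx2⟩ ⟨hy1, hy2⟩
    exact ⟨fun n => by simp [smul_add, hx1 n, hy1 n],
      fun n => by simp [smul_add, hx2 n, hy2 n]⟩
  neg_mem' := by
    rintro x ⟨hx1, hx2⟩
    exact ⟨fun n => by simp [hx1 n], fun n => by simp [hx2 n]⟩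

/-- The map on `p`-adic Tate modules induced by a homomorphism of abelian groups,
acting componentwise on compatible sequences. -/
def tateMap (p : ℕ) {A B : Type} [AddCommGroup A] [AddCommGroup B] (g : A →+ B) :
    tateModule p A →+ tateModule p B where
  toFun x := ⟨fun n => g (x.1 n),
    ⟨fun n => by rw [← map_nsmul, x.2.1 n, map_zero],
     fun n => by rw [← map_nsmul, x.2.2 n]⟩⟩
  map_zero' := by
    apply Subtype.ext
    funext n
    simp
  map_add' x y := by
    apply Subtype.ext
    funext n
    simp


/-- In a Tate-module element, each component is a `p ^ m`-multiple of the
component `m` steps further along. -/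
lemma tateModule_compat {p : ℕ} {X : Type} [AddCommGroup X] (y : tateModule p X)
    (n m : ℕ) : (y : ℕ → X) n = p ^ m • (y : ℕ → X) (m + n) := by
  induction m with
  | zero => simp
  | succ m ih =>
    have h := y.2.2 (m + n)
    rw [ih, ← h, Nat.succ_add, pow_succ, mul_smul]

/-- Let `0 → C → A → B → 0` be a short exact sequence of abelian groups with `A`
divisible and `C` a finite abelian `p`-group.  Then the induced map `T_p A → T_p B` of
`p`-adic Tate modules is injective and its cokernel is isomorphic to `C`: there is an
exact sequence `0 → T_p A → T_p B → C → 0`. -/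
theorem tateMap_injective_and_cokernel_iso
    {C A B : Type} [AddCommGroup C] [AddCommGroup A] [AddCommGroup B] [Fintype C]
    (p : ℕ) (hp : p.Prime) (hC : ∃ k : ℕ, Fintype.card C = p ^ k)
    (f : C →+ A) (g : A →+ B)
    (hf : Function.Injective f) (hg : Function.Surjective g)
    (hfg : Function.Exact f g)
    (hdiv : ∀ (a : A) (m : ℕ), 0 < m → ∃ a' : A, m • a' = a) :
    Function.Injective (tateMap p g) ∧
      ∃ β : tateModule p B →+ C,
        Function.Exact (tateMap p g) β ∧ Function.Surjective β := by
  obtain ⟨k, hk⟩ := hC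
  choose L gL using hg
  choose D hD using fun a => hdiv a p hp.pos
  -- `p ^ k` kills `C`
  have hpk : ∀ c : C, p ^ k • c = 0 := fun c => by
    rw [← hk]; exact card_nsmul_eq_zero
  -- two elements with the same image under `g` have equal `p ^ k`-multiples
  have hker : ∀ u v : A, g u = g v → p ^ k • u = p ^ k • v := by
    intro u v huv
    have h0 : g (u - v) = 0 := by rw [map_sub, huv, sub_self]
    obtain ⟨c, hc⟩ := (hfg (u - v)).1 h0
    have : p ^ k • (u - v) = 0 := by
      rw [← hc, ← map_nsmul, hpk, map_zero]
    rw [smul_sub, sub_eq_zero] at this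
    exact this
  -- the candidate for the connecting map
  set β0 : tateModule p B → C := fun y => Function.invFun f (p ^ k • L ((y : ℕ → B) k))
    with hβ0
  -- master lemma: `f (β0 y) = p ^ (k + d) • b` for any lift `b` of the `(k+d)`-th
  -- component of `y`
  have master : ∀ (y : tateModule p B) (d : ℕ) (b : A),
      g b = (y : ℕ → B) (k + d) → f (β0 y) = p ^ (k + d) • b := by
    intro y d b hb
    have hmem : p ^ k • L ((y : ℕ → B) k) ∈ Set.range f := by
      refine (hfg _).1 ?_
      rw [map_nsmul, gL, ← y.2.1 k]
    have h1 : f (β0 y) = p ^ k • L ((y : ℕ → B) k) := by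
      rw [hβ0]; exact Function.invFun_eq hmem
    have h2 : g (p ^ d • b) = (y : ℕ → B) k := by
      rw [map_nsmul, hb, Nat.add_comm k d, ← tateModule_compat y k d]
    rw [h1, hker _ _ ((gL _).trans h2.symm), smul_smul, ← pow_add]
  -- injectivity of the induced map on Tate modules
  have hinj : Function.Injective (tateMap p g) := by
    rw [injective_iff_map_eq_zero]
    intro x hx
    have hx0 : ∀ n, g ((x : ℕ → A) n) = 0 := by
      intro n
      exact congrFun (congrArg Subtype.val hx) n
    apply Subtype.ext
    funext n
    have h1 : (x : ℕ → A) n = p ^ k • (x : ℕ → A) (k + n) := tateModule_compat x n k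
    have h2 : p ^ k • (x : ℕ → A) (k + n) = p ^ k • (0 : A) :=
      hker _ _ (by rw [hx0, map_zero])
    simp only [smul_zero] at h2
    rw [h1, h2]; rfl
  refine ⟨hinj, ⟨{ toFun := β0, map_zero' := ?_, map_add' := ?_ }, ?_, ?_⟩⟩
  · -- map_zero'
    apply hf
    rw [map_zero, master 0 0 0 (by rw [map_zero]; rfl), smul_zero]
  · -- map_add'
    intro y z
    apply hf
    have hy : f (β0 y) = p ^ (k + 0) • L ((y : ℕ → B) k) := master y 0 _ (gL _)
    have hz : f (β0 z) = p ^ (k + 0) • L ((z : ℕ → B) k) := master z 0 _ (gL _)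
    have hyz : f (β0 (y + z)) =
        p ^ (k + 0) • (L ((y : ℕ → B) k) + L ((z : ℕ → B) k)) :=
      master (y + z) 0 _ (by rw [map_add, gL, gL]; rfl)
    rw [map_add, hyz, smul_add, hy, hz]
  · -- exactness
    intro y
    constructor
    · intro hy0
      -- hy0 : β0 y = 0 (as value of the bundled hom)
      have hy : β0 y = 0 := hy0
      set b : ℕ → A := fun n => L ((y : ℕ → B) (k + n)) with hb
      have hgb : ∀ n, g (b n) = (y : ℕ → B) (k + n) := fun n => gL _
      have hkill : ∀ n, p ^ (k + n) • b n = 0 := by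
        intro n
        rw [← master y n (b n) (hgb n), hy, map_zero]
      refine ⟨⟨fun n => p ^ k • b n, ?_, ?_⟩, ?_⟩
      · intro n
        rw [smul_smul, ← pow_add, ← Nat.add_comm k n, hkill n]
      · intro n
        have h1 : g (p • b (n + 1)) = (y : ℕ → B) (k + n) := by
          rw [map_nsmul, hgb]
          exact y.2.2 (k + n)
        have h2 := hker _ _ (h1.trans (hgb n).symm)
        calc p • p ^ k • b (n + 1) = p ^ k • p • b (n + 1) := by
              rw [smul_smul, smul_smul, Nat.mul_comm]
          _ = p ^ k • b n := h2
      · apply Subtype.ext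
        funext n
        show g (p ^ k • b n) = (y : ℕ → B) n
        rw [map_nsmul, hgb, ← tateModule_compat y n k]
    · rintro ⟨x, rfl⟩
      show β0 (tateMap p g x) = 0
      apply hf
      have : f (β0 (tateMap p g x)) = p ^ (k + 0) • (x : ℕ → A) k :=
        master _ 0 _ rfl
      rw [map_zero, this]
      exact x.2.1 k
  · -- surjectivity
    intro c
    set a : ℕ → A := fun n => D^[n] (f c) with ha
    have ha0 : a 0 = f c := rfl
    have hstep : ∀ n, p • a (n + 1) = a n := by
      intro n
      rw [ha]
      simp only [Function.iterate_succ_apply']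
      exact hD _
    have htor : ∀ n, p ^ n • a n = f c := by
      intro n
      induction n with
      | zero => simpa using ha0
      | succ n ih => rw [pow_succ, mul_smul, hstep n, ih]
    have hmem1 : ∀ n : ℕ, p ^ n • g (a n) = 0 := by
      intro n
      rw [← map_nsmul, htor n, (hfg (f c)).2 ⟨c, rfl⟩]
    have hmem2 : ∀ n : ℕ, p • g (a (n + 1)) = g (a n) := by
      intro n
      rw [← map_nsmul, hstep n]
    refine ⟨⟨fun n => g (a n), hmem1, hmem2⟩, ?_⟩
    show β0 ⟨fun n => g (a n), hmem1, hmem2⟩ = c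
    apply hf
    rw [master ⟨fun n => g (a n), hmem1, hmem2⟩ 0 (a k) rfl]
    exact htor k
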